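/- The functional μ(u) = ∑_{k=1}^m (1/p(k-1)) |Δu(k-1)|^{p(k-1)} is coercive on Y (the orthogonal complement of constant sequences in H_m): μ(u) → ∞ as ‖u‖_e → ∞ on Y. In particular μ(u) ≥ (1/p⁺)(∑_{k=1}^m |Δu(k-1)|^{p⁻}) − m/p⁺ for all u ∈ Y. -/

import Mathlib

private lemma stmt6_pointwise {pm pp q t : ℝ} (h1 : 1 ≤ pm) (hqm : pm ≤ q) (hqp : q ≤ pp)
    (ht : 0 ≤ t) : 1 / pp * t ^ pm - 1 / pp ≤ 1 / q * t ^ q := by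
  have hq1 : 1 ≤ q := h1.trans hqm
  have hpp1 : 1 ≤ pp := hq1.trans hqp
  have hppos : 0 < pp := by linarith
  have hqpos : 0 < q := by linarith
  have hkey : t ^ pm - 1 ≤ t ^ q := by
    rcases le_total t 1 with h | h
    · have h2 : t ^ pm ≤ 1 := Real.rpow_le_one ht h (by linarith)
      have h3 : 0 ≤ t ^ q := Real.rpow_nonneg ht q
      linarith
    · have := Real.rpow_le_rpow_of_exponent_le h hqm
      linarith
  calc 1 / pp * t ^ pm - 1 / pp = 1 / pp * (t ^ pm - 1) := by ring
    _ ≤ 1 / pp * t ^ q := by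
        apply mul_le_mul_of_nonneg_left hkey (by positivity)
    _ ≤ 1 / q * t ^ q := by
        apply mul_le_mul_of_nonneg_right _ (Real.rpow_nonneg ht q)
        exact one_div_le_one_div_of_le hqpos hqp

private lemma stmt6_tel {E : Type*} [NormedAddCommGroup E] (u : ℤ → E) (l : ℤ) :
    ∀ j, l ≤ j → ‖u j - u l‖ ≤ ∑ k ∈ Finset.Ioc l j, ‖u k - u (k - 1)‖ := by
  intro j
  refine Int.le_induction
    (motive := fun j _ => ‖u j - u l‖ ≤ ∑ k ∈ Finset.Ioc l j, ‖u k - u (k - 1)‖) ?_ ?_ j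
  · simp
  · intro j hj ih
    rw [show Finset.Ioc l (j + 1) = insert (j + 1) (Finset.Ioc l j) by
      ext x; simp only [Finset.mem_Ioc, Finset.mem_insert]; omega]
    rw [Finset.sum_insert (by simp)]
    have htri : ‖u (j + 1) - u l‖ ≤ ‖u (j + 1) - u j‖ + ‖u j - u l‖ := by
      have := norm_add_le (u (j + 1) - u j) (u j - u l)
      simpa using this
    have heq : u (j + 1 - 1) = u j := by norm_num
    rw [heq]
    linarith [ih]

set_option maxHeartbeats 1000000 in
theorem stmt6 (n m : ℕ) (hm : 2 ≤ m)
    (p : ℤ → ℝ) (hp1 : ∀ k, 1 ≤ p k) (hpper : ∀ k : ℤ, p (k + (m : ℤ)) = p k)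
    (pminus pplus : ℝ)
    (hpm : IsLeast ((fun k => p k) '' Set.Icc (1 : ℤ) (m : ℤ)) pminus)
    (hpp : IsGreatest ((fun k => p k) '' Set.Icc (1 : ℤ) (m : ℤ)) pplus) :
    -- coercivity of μ on Y
    (∀ C : ℝ, ∃ R : ℝ, ∀ u : ℤ → EuclideanSpace ℝ (Fin n),
      (∀ k : ℤ, u (k + (m : ℤ)) = u k) →
      (∀ a : EuclideanSpace ℝ (Fin n),
        (∑ k ∈ Finset.Icc (1 : ℤ) (m : ℤ), inner ℝ (u k) a : ℝ) = 0) →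
      R ≤ (∑ k ∈ Finset.Icc (1 : ℤ) (m : ℤ), ‖u k‖ ^ (2 : ℕ)) ^ ((1 : ℝ) / 2) →
      C ≤ ∑ k ∈ Finset.Icc (1 : ℤ) (m : ℤ),
            (1 / p (k - 1)) * ‖u k - u (k - 1)‖ ^ (p (k - 1))) ∧
    -- the quantitative lower bound
    (∀ u : ℤ → EuclideanSpace ℝ (Fin n),
      (∀ k : ℤ, u (k + (m : ℤ)) = u k) →
      (∀ a : EuclideanSpace ℝ (Fin n),
        (∑ k ∈ Finset.Icc (1 : ℤ) (m : ℤ), inner ℝ (u k) a : ℝ) = 0) →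
      (1 / pplus) * (∑ k ∈ Finset.Icc (1 : ℤ) (m : ℤ), ‖u k - u (k - 1)‖ ^ pminus)
          - (m : ℝ) / pplus ≤
        ∑ k ∈ Finset.Icc (1 : ℤ) (m : ℤ),
          (1 / p (k - 1)) * ‖u k - u (k - 1)‖ ^ (p (k - 1))) := by
  -- basic facts about pminus, pplus
  obtain ⟨⟨k0, hk0, hpk0⟩, hpmlb⟩ := hpm
  obtain ⟨⟨k1, hk1, hpk1⟩, hppub⟩ := hpp
  have h1pm : 1 ≤ pminus := hpk0 ▸ hp1 k0
  have h1pp : 1 ≤ pplus := by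
    have : pminus ≤ pplus := hpmlb ⟨k1, hk1, hpk1⟩
    linarith
  have hpppos : 0 < pplus := by linarith
  have hpmpos : 0 < pminus := by linarith
  have hmIcc : (m : ℤ) ∈ Set.Icc (1 : ℤ) (m : ℤ) := by
    constructor <;> [exact_mod_cast Nat.one_le_of_lt hm; exact le_refl _]
  have hp0 : p 0 = p m := by
    have := hpper 0
    simp only [zero_add] at this
    exact this.symm
  have hpb : ∀ k ∈ Finset.Icc (1 : ℤ) (m : ℤ), pminus ≤ p (k - 1) ∧ p (k - 1) ≤ pplus := by
    intro k hk
    rw [Finset.mem_Icc] at hk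
    have hmem : p (k - 1) ∈ (fun k => p k) '' Set.Icc (1 : ℤ) (m : ℤ) := by
      rcases eq_or_lt_of_le hk.1 with h | h
      · have : k - 1 = 0 := by omega
        rw [this, hp0]
        exact ⟨(m : ℤ), hmIcc, rfl⟩
      · exact ⟨k - 1, ⟨by omega, by omega⟩, rfl⟩
    exact ⟨hpmlb hmem, hppub hmem⟩
  have hcard : (Finset.Icc (1 : ℤ) (m : ℤ)).card = m := by
    rw [Int.card_Icc]; omega
  -- the quantitative bound, valid for all u
  have key : ∀ u : ℤ → EuclideanSpace ℝ (Fin n),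
      (1 / pplus) * (∑ k ∈ Finset.Icc (1 : ℤ) (m : ℤ), ‖u k - u (k - 1)‖ ^ pminus)
          - (m : ℝ) / pplus ≤
        ∑ k ∈ Finset.Icc (1 : ℤ) (m : ℤ),
          (1 / p (k - 1)) * ‖u k - u (k - 1)‖ ^ (p (k - 1)) := by
    intro u
    have heq : (1 / pplus) * (∑ k ∈ Finset.Icc (1 : ℤ) (m : ℤ), ‖u k - u (k - 1)‖ ^ pminus)
        - (m : ℝ) / pplus
        = ∑ k ∈ Finset.Icc (1 : ℤ) (m : ℤ),
            (1 / pplus * ‖u k - u (k - 1)‖ ^ pminus - 1 / pplus) := by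
      rw [Finset.sum_sub_distrib, Finset.sum_const, hcard, ← Finset.mul_sum, nsmul_eq_mul]
      ring
    rw [heq]
    apply Finset.sum_le_sum
    intro k hk
    exact stmt6_pointwise h1pm (hpb k hk).1 (hpb k hk).2 (norm_nonneg _)
  refine ⟨?_, fun u _ _ => key u⟩
  -- coercivity
  intro C
  set B : ℝ := max (pplus * C + m) 1 with hB
  have hB1 : 1 ≤ B := le_max_right _ _
  have hBpos : 0 < B := by linarith
  refine ⟨Real.sqrt m * m * B ^ ((1:ℝ) / pminus), ?_⟩
  intro u _ horth hR
  -- ∑ u = 0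
  have hsum0 : (∑ k ∈ Finset.Icc (1 : ℤ) (m : ℤ), u k) = 0 := by
    have h := horth (∑ k ∈ Finset.Icc (1 : ℤ) (m : ℤ), u k)
    rw [← sum_inner] at h
    exact inner_self_eq_zero.mp h
  set S : ℝ := ∑ k ∈ Finset.Icc (1 : ℤ) (m : ℤ), ‖u k - u (k - 1)‖ with hSdef
  have hSnn : 0 ≤ S := Finset.sum_nonneg fun _ _ => norm_nonneg _
  -- pair differences bounded by S
  have hdiff : ∀ j ∈ Finset.Icc (1 : ℤ) (m : ℤ), ∀ l ∈ Finset.Icc (1 : ℤ) (m : ℤ),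
      ‖u j - u l‖ ≤ S := by
    have base : ∀ l ∈ Finset.Icc (1 : ℤ) (m : ℤ), ∀ j ∈ Finset.Icc (1 : ℤ) (m : ℤ),
        l ≤ j → ‖u j - u l‖ ≤ S := by
      intro l hl j hj hlj
      rw [Finset.mem_Icc] at hl hj
      refine (stmt6_tel u l j hlj).trans ?_
      apply Finset.sum_le_sum_of_subset_of_nonneg
      · intro x hx
        rw [Finset.mem_Ioc] at hx
        rw [Finset.mem_Icc]
        omega
      · intro _ _ _; exact norm_nonneg _
    intro j hj l hl
    rcases le_total l j with h | h
    · exact base l hl j hj h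
    · rw [norm_sub_rev]; exact base j hj l hl h
  -- each ‖u j‖ bounded by S
  have hujS : ∀ j ∈ Finset.Icc (1 : ℤ) (m : ℤ), ‖u j‖ ≤ S := by
    intro j hj
    have hmul : (m : ℝ) * ‖u j‖ = ‖∑ l ∈ Finset.Icc (1 : ℤ) (m : ℤ), (u j - u l)‖ := by
      rw [Finset.sum_sub_distrib, hsum0, sub_zero, Finset.sum_const, hcard,
        ← Nat.cast_smul_eq_nsmul ℝ, norm_smul]
      simp
    have hle : (m : ℝ) * ‖u j‖ ≤ (m : ℝ) * S := by
      rw [hmul]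
      calc ‖∑ l ∈ Finset.Icc (1 : ℤ) (m : ℤ), (u j - u l)‖
          ≤ ∑ l ∈ Finset.Icc (1 : ℤ) (m : ℤ), ‖u j - u l‖ := norm_sum_le _ _
        _ ≤ ∑ l ∈ Finset.Icc (1 : ℤ) (m : ℤ), S := Finset.sum_le_sum fun l hl => hdiff j hj l hl
        _ = (m : ℝ) * S := by rw [Finset.sum_const, hcard, nsmul_eq_mul]
    have hm0 : (0:ℝ) < m := by positivity
    exact le_of_mul_le_mul_left hle hm0
  -- norm bound: ‖u‖_e ≤ √m * S
  have hnorm : (∑ k ∈ Finset.Icc (1 : ℤ) (m : ℤ), ‖u k‖ ^ (2 : ℕ)) ^ ((1 : ℝ) / 2)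
      ≤ Real.sqrt m * S := by
    have h1 : (∑ k ∈ Finset.Icc (1 : ℤ) (m : ℤ), ‖u k‖ ^ (2 : ℕ)) ≤ (m : ℝ) * S ^ 2 := by
      calc (∑ k ∈ Finset.Icc (1 : ℤ) (m : ℤ), ‖u k‖ ^ (2 : ℕ))
          ≤ ∑ k ∈ Finset.Icc (1 : ℤ) (m : ℤ), S ^ 2 :=
            Finset.sum_le_sum fun k hk => pow_le_pow_left₀ (norm_nonneg _) (hujS k hk) 2
        _ = (m : ℝ) * S ^ 2 := by rw [Finset.sum_const, hcard, nsmul_eq_mul]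
    have hnn : (0:ℝ) ≤ ∑ k ∈ Finset.Icc (1 : ℤ) (m : ℤ), ‖u k‖ ^ (2 : ℕ) :=
      Finset.sum_nonneg fun _ _ => by positivity
    rw [← Real.sqrt_eq_rpow]
    calc Real.sqrt (∑ k ∈ Finset.Icc (1 : ℤ) (m : ℤ), ‖u k‖ ^ (2 : ℕ))
        ≤ Real.sqrt ((m : ℝ) * S ^ 2) := Real.sqrt_le_sqrt h1
      _ = Real.sqrt m * S := by
          rw [Real.sqrt_mul (by positivity), Real.sqrt_sq hSnn]
  -- derive S bound
  have hsm : (0:ℝ) < Real.sqrt m := Real.sqrt_pos.mpr (by positivity)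
  have hS1 : Real.sqrt m * ((m : ℝ) * B ^ ((1:ℝ) / pminus)) ≤ Real.sqrt m * S := by
    calc Real.sqrt m * ((m : ℝ) * B ^ ((1:ℝ) / pminus))
        = Real.sqrt m * m * B ^ ((1:ℝ) / pminus) := by ring
      _ ≤ _ := hR.trans hnorm
  have hS2 : (m : ℝ) * B ^ ((1:ℝ) / pminus) ≤ S := le_of_mul_le_mul_left hS1 hsm
  -- find index achieving average
  have hne : (Finset.Icc (1 : ℤ) (m : ℤ)).Nonempty := by
    rw [← Finset.card_pos, hcard]; omega
  have hex : ∃ j ∈ Finset.Icc (1 : ℤ) (m : ℤ), S / m ≤ ‖u j - u (j - 1)‖ := by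
    apply Finset.exists_le_of_sum_le hne
    rw [Finset.sum_const, hcard, nsmul_eq_mul, ← hSdef]
    have hm0 : (0:ℝ) < m := by positivity
    rw [mul_div_cancel₀ _ (ne_of_gt hm0)]
  obtain ⟨j, hjmem, hj⟩ := hex
  -- lower bound on ∑ t^pminus
  have hBle : B ≤ ∑ k ∈ Finset.Icc (1 : ℤ) (m : ℤ), ‖u k - u (k - 1)‖ ^ pminus := by
    have hm0 : (0:ℝ) < m := by positivity
    have hSm : B ^ ((1:ℝ) / pminus) ≤ S / m := by
      rw [le_div_iff₀ hm0]
      linarith [hS2]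
    have h2 : B = (B ^ ((1:ℝ) / pminus)) ^ pminus := by
      rw [← Real.rpow_mul hBpos.le, one_div_mul_cancel (ne_of_gt hpmpos), Real.rpow_one]
    calc B = (B ^ ((1:ℝ) / pminus)) ^ pminus := h2
      _ ≤ (S / m) ^ pminus := Real.rpow_le_rpow (Real.rpow_nonneg hBpos.le _) hSm hpmpos.le
      _ ≤ ‖u j - u (j - 1)‖ ^ pminus :=
          Real.rpow_le_rpow (div_nonneg hSnn hm0.le) hj hpmpos.le
      _ ≤ _ := Finset.single_le_sum (f := fun k => ‖u k - u (k - 1)‖ ^ pminus)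
          (fun k _ => Real.rpow_nonneg (norm_nonneg _) _) hjmem
  -- conclude
  refine le_trans ?_ (key u)
  have h3 : pplus * C + (m : ℝ) ≤ B := le_max_left _ _
  have h4 : pplus * C + (m : ℝ) ≤ ∑ k ∈ Finset.Icc (1 : ℤ) (m : ℤ),
      ‖u k - u (k - 1)‖ ^ pminus := h3.trans hBle
  have h5 : 1 / pplus * (pplus * C + (m : ℝ)) ≤ 1 / pplus * ∑ k ∈ Finset.Icc (1 : ℤ) (m : ℤ),
      ‖u k - u (k - 1)‖ ^ pminus := mul_le_mul_of_nonneg_left h4 (by positivity)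
  have h6 : 1 / pplus * (pplus * C + (m : ℝ)) = C + (m : ℝ) / pplus := by field_simp
  linarith
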